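/- arXiv:1707.04351 — 6 statements merged into one kernel-verified Lean document; each statement's English description precedes it below -/
import Mathlib

section
/- For every integer r ≥ 1 and every integer k ≥ 0, the generating function of the sequence n ↦ N(n,r,k) is given by ∑_{n=0}^∞ N(n,r,k) x^n = x^{kr} · ((1 - x)/(1 - 2x + x^r - x^{r+1}))^{k+1}; equivalently, as formal power series over ℤ, (1 - 2x + x^r - x^{r+1})^{k+1} · ∑_{n=0}^∞ N(n,r,k) x^n = x^{kr} · (1 - x)^{k+1}. -/
/-- The list of maximal runs of a binary word. -/
def runs (w : List Bool) : List (List Bool) := w.splitBy (· == ·)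

/-- The number of maximal runs of length `r` in a binary word. -/
def runCount (w : List Bool) (r : ℕ) : ℕ :=
  ((runs w).filter (fun g => g.length = r)).length

/-- The number of maximal runs of 1s of length `r` in a binary word. -/
def oneRunCount (w : List Bool) (r : ℕ) : ℕ :=
  ((runs w).filter (fun g => g.length = r ∧ g.head? = some true)).length

/-- `N n r k`: the number of binary words of length `n` that begin with `0`
(the empty word counts when `n = 0`) and contain exactly `k` maximal runs of length `r`. -/
def N (n r k : ℕ) : ℕ :=
  Fintype.card {w : Fin n → Bool //
    (List.ofFn w).head? ≠ some true ∧ runCount (List.ofFn w) r = k}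

/-- `M n r k`: the number of binary words of length `n` that begin with `0`
and contain exactly `k` maximal runs of 1s of length `r`. -/
def M (n r k : ℕ) : ℕ :=
  Fintype.card {w : Fin n → Bool //
    (List.ofFn w).head? ≠ some true ∧ oneRunCount (List.ofFn w) r = k}

/-!
Run-length encoding identifies the binary words of length `n` beginning with `0` with the
compositions of `n`, maximal runs of length `r` becoming parts equal to `r`. Let `F k` be the
generating function of compositions with exactly `k` parts equal to `r`. Splitting off the first
part gives `F k = [k = 0] + X (1/(1 - X) - X^(r-1)) F k + X^r F (k - 1)`, and multiplying by
`1 - X` turns this into `(1 - 2X + X^r - X^(r+1)) F k = (1 - X) ([k = 0] + X^r F (k - 1))`.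
(with `F (-1) = 0`). Induction on `k` gives the formula.
-/

section RunLengthEncoding

open List

def runLengths (w : List Bool) : List ℕ := (runs w).map length

def ofRunLengths : List ℕ → Bool → List Bool
  | [], _ => []
  | m :: l, b => replicate m b ++ ofRunLengths l (!b)

theorem runs_replicate_append {m : ℕ} {b : Bool} {t : List Bool} (hm : m ≠ 0)
    (ht : t.head? ≠ some b) : runs (replicate m b ++ t) = replicate m b :: runs t := by
  rw [runs, splitBy_append, splitBy_of_isChain (by simpa using hm)
    (isChain_replicate_of_rel m (by simp))]
  · rfl
  · intro x hx y hy
    obtain rfl : x = b := by simp_all [getLast?_replicate]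
    simpa using fun h : x = y => ht (h ▸ hy)

theorem runCount_eq_count (w : List Bool) (r : ℕ) : runCount w r = (runLengths w).count r := by
  rw [runCount, runLengths, count_eq_countP, countP_map, countP_eq_length_filter]
  rfl

theorem sum_runLengths (w : List Bool) : (runLengths w).sum = w.length := by
  rw [runLengths, ← length_flatten, runs, flatten_splitBy]

theorem pos_of_mem_runLengths {w : List Bool} {m : ℕ} (hm : m ∈ runLengths w) : 0 < m := by
  obtain ⟨g, hg, rfl⟩ := mem_map.1 hm
  exact length_pos_iff.2 (ne_nil_of_mem_splitBy hg)

theorem length_ofRunLengths (l : List ℕ) (b : Bool) : (ofRunLengths l b).length = l.sum := by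
  induction l generalizing b with
  | nil => rfl
  | cons m l ih => rw [ofRunLengths, length_append, length_replicate, ih, sum_cons]

theorem head?_ofRunLengths_ne {l : List ℕ} (hl : ∀ m ∈ l, 0 < m) (b : Bool) :
    (ofRunLengths l b).head? ≠ some (!b) := by
  cases l with
  | nil => simp [ofRunLengths]
  | cons m l =>
    obtain ⟨m, rfl⟩ := Nat.exists_eq_add_of_lt (hl m mem_cons_self)
    simp [ofRunLengths, replicate_succ]

theorem runLengths_ofRunLengths {l : List ℕ} (hl : ∀ m ∈ l, 0 < m) (b : Bool) :
    runLengths (ofRunLengths l b) = l := by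
  induction l generalizing b with
  | nil => rfl
  | cons m l ih =>
    have hl' : ∀ m ∈ l, 0 < m := fun m hm => hl m (mem_cons_of_mem _ hm)
    rw [ofRunLengths, runLengths, runs_replicate_append (hl m mem_cons_self).ne'
      (by simpa using head?_ofRunLengths_ne hl' (!b)), map_cons, length_replicate]
    exact congrArg _ (ih hl' !b)

theorem exists_eq_replicate_append {w : List Bool} {b : Bool} (hw : w.head? = some b) :
    ∃ m t, m ≠ 0 ∧ t.head? ≠ some b ∧ w = replicate m b ++ t := by
  induction w with
  | nil => simp at hw
  | cons a w ih =>
    obtain rfl : a = b := by simpa using hw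
    by_cases h : w.head? = some a
    · obtain ⟨m, t, -, ht, rfl⟩ := ih h
      exact ⟨m + 1, t, by simp, ht, by simp [replicate_succ]⟩
    · exact ⟨1, w, by simp, h, by simp⟩

theorem ofRunLengths_runLengths {w : List Bool} {b : Bool} (hw : w.head? ≠ some (!b)) :
    ofRunLengths (runLengths w) b = w := by
  induction h : w.length using Nat.strong_induction_on generalizing w b with
  | _ n ih =>
  cases hb : w.head? with
  | none =>
    rw [head?_eq_none_iff] at hb
    subst hb
    rfl
  | some c =>
    obtain rfl : c = b := by cases b <;> cases c <;> simp_all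
    obtain ⟨m, t, hm, ht, rfl⟩ := exists_eq_replicate_append hb
    rw [runLengths, runs_replicate_append hm ht, map_cons, length_replicate, ofRunLengths,
      ← runLengths, ih t.length (by simp [← h]; omega) (by simpa using ht) rfl]

def runComposition {n : ℕ} (w : Fin n → Bool) : Composition n where
  blocks := runLengths (ofFn w)
  blocks_pos := pos_of_mem_runLengths
  blocks_sum := by rw [sum_runLengths, length_ofFn]

theorem bijective_runComposition (n : ℕ) :
    Function.Bijective fun w : {w : Fin n → Bool // (ofFn w).head? ≠ some true} =>
      runComposition w.1 := by
  constructor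
  · rintro ⟨w, hw⟩ ⟨w', hw'⟩ h
    have h : runLengths (ofFn w) = runLengths (ofFn w') := congrArg Composition.blocks h
    refine Subtype.ext (ofFn_injective ?_)
    rw [← ofRunLengths_runLengths (b := false) hw, h, ofRunLengths_runLengths hw']
  · intro c
    have hlen : (ofRunLengths c.blocks false).length = n := by
      rw [length_ofRunLengths, c.blocks_sum]
    obtain ⟨w, hw⟩ : ∃ w : Fin n → Bool, ofFn w = ofRunLengths c.blocks false :=
      ⟨_, (ofFn_congr hlen _).symm.trans (ofFn_get _)⟩
    refine ⟨⟨w, hw ▸ head?_ofRunLengths_ne (fun _ => c.one_le_blocks) false⟩, ?_⟩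
    exact Composition.ext <|
      (congrArg runLengths hw).trans (runLengths_ofRunLengths (fun _ => c.one_le_blocks) false)

end RunLengthEncoding

open Finset

namespace Composition

theorem blocks_ne_nil {n : ℕ} (c : Composition (n + 1)) : c.blocks ≠ [] :=
  fun h => n.succ_ne_zero (c.blocks_eq_nil.1 h)

def consEquiv (n : ℕ) : Composition (n + 1) ≃ Σ i : Fin (n + 1), Composition (n - i) where
  toFun c :=
    have hc := List.cons_head_tail c.blocks_ne_nil
    have h0 := c.one_le_blocks (List.head_mem c.blocks_ne_nil)
    have hs := c.blocks_sum
    ⟨⟨c.blocks.head c.blocks_ne_nil - 1, by rw [← hc, List.sum_cons] at hs; omega⟩,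
      ⟨c.blocks.tail, fun h => c.blocks_pos (List.mem_of_mem_tail h),
        by rw [← hc, List.sum_cons] at hs; simp only; omega⟩⟩
  invFun p := ⟨((p.1 : ℕ) + 1) :: p.2.blocks, by
      rintro i (_ | ⟨_, h⟩)
      exacts [Nat.succ_pos _, p.2.blocks_pos h], by
      rw [List.sum_cons, p.2.blocks_sum]; omega⟩
  left_inv c := by
    ext1
    have := c.one_le_blocks (List.head_mem c.blocks_ne_nil)
    simp only
    rw [Nat.sub_add_cancel this, List.cons_head_tail]
  right_inv p := rfl

end Composition

def compCount (n r k : ℕ) : ℕ := #{c : Composition n | c.blocks.count r = k}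

theorem N_eq_compCount (n r k : ℕ) : N n r k = compCount n r k := by
  rw [N, compCount, ← Fintype.card_subtype,
    ← Fintype.card_congr (Equiv.subtypeSubtypeEquivSubtypeInter _ _)]
  exact Fintype.card_congr ((Equiv.ofBijective _ (bijective_runComposition n)).subtypeEquiv
    fun _ => by rw [runCount_eq_count]; rfl)

theorem compCount_succ (n r k : ℕ) : compCount (n + 1) r k =
    ∑ i ∈ range (n + 1), #{c : Composition (n - i) | ((i + 1) :: c.blocks).count r = k} := by
  rw [compCount, ← card_equiv (Composition.consEquiv n).symm
    (s := {p | ((Composition.consEquiv n).symm p).blocks.count r = k}) (by simp),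
    card_filter, Fintype.sum_sigma, ← Fin.sum_univ_eq_sum_range
    (fun i => #{c : Composition (n - i) | ((i + 1) :: c.blocks).count r = k})]
  simp_rw [card_filter]
  rfl

theorem compCount_zero (r k : ℕ) : compCount 0 r k = if k = 0 then 1 else 0 := by
  have h (c : Composition 0) : c.blocks = [] := c.blocks_eq_nil.2 rfl
  by_cases hk : k = 0 <;> simp [compCount, h, hk, eq_comm, composition_card]

open PowerSeries

noncomputable def compSeries (r k : ℕ) : PowerSeries ℤ := mk fun n => (compCount n r k : ℤ)

theorem compSeries_zero_eq (s : ℕ) :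
    compSeries (s + 1) 0 = 1 + X * ((PowerSeries.mk 1 - X ^ s) * compSeries (s + 1) 0) := by
  ext (_ | n)
  · simp [compSeries, compCount_zero]
  · rw [map_add, coeff_succ_X_mul, coeff_mul, Finset.Nat.sum_antidiagonal_eq_sum_range_succ_mk,
      compSeries, coeff_mk, compCount_succ]
    push_cast
    simp only [coeff_one, Nat.succ_ne_zero, if_false, zero_add]
    refine sum_congr rfl fun i _ => ?_
    -- the first part `i + 1` is one of the counted parts exactly when `i = s`
    rcases eq_or_ne i s with rfl | hi
    · simp [compCount]
    · simp [compCount, coeff_X_pow, hi]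

theorem compSeries_succ_eq (s k : ℕ) :
    compSeries (s + 1) (k + 1) =
      X * ((PowerSeries.mk 1 - X ^ s) * compSeries (s + 1) (k + 1) +
        X ^ s * compSeries (s + 1) k) := by
  ext (_ | n)
  · simp [compSeries, compCount_zero]
  · rw [coeff_succ_X_mul, map_add, coeff_mul, coeff_mul, ← sum_add_distrib,
      Finset.Nat.sum_antidiagonal_eq_sum_range_succ_mk, compSeries, coeff_mk, compCount_succ]
    push_cast
    refine sum_congr rfl fun i _ => ?_
    rcases eq_or_ne i s with rfl | hi
    · simp [compCount, compSeries]
    · simp [compCount, coeff_X_pow, hi]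

noncomputable def runDenom (r : ℕ) : PowerSeries ℤ := 1 - 2 * X + X ^ r - X ^ (r + 1)

theorem runDenom_eq_mul (s : ℕ) :
    runDenom (s + 1) = (1 - X) * (1 - X * (PowerSeries.mk 1 - X ^ s)) := by
  rw [runDenom]
  linear_combination (X : PowerSeries ℤ) * mk_one_mul_one_sub_eq_one (S := ℤ)

theorem runDenom_mul_compSeries_zero (s : ℕ) :
    runDenom (s + 1) * compSeries (s + 1) 0 = 1 - X := by
  linear_combination (1 - X) * compSeries_zero_eq s + compSeries (s + 1) 0 * runDenom_eq_mul s

theorem runDenom_mul_compSeries_succ (s k : ℕ) :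
    runDenom (s + 1) * compSeries (s + 1) (k + 1) =
      X ^ (s + 1) * (1 - X) * compSeries (s + 1) k := by
  linear_combination
    (1 - X) * compSeries_succ_eq s k + compSeries (s + 1) (k + 1) * runDenom_eq_mul s

theorem runDenom_pow_mul_compSeries (s k : ℕ) :
    runDenom (s + 1) ^ (k + 1) * compSeries (s + 1) k =
      X ^ (k * (s + 1)) * (1 - X) ^ (k + 1) := by
  induction k with
  | zero => simpa using runDenom_mul_compSeries_zero s
  | succ k ih =>
    linear_combination
      runDenom (s + 1) ^ (k + 1) * runDenom_mul_compSeries_succ s k + X ^ (s + 1) * (1 - X) * ih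

/-- the generating function of `n ↦ N n r k` is
`x^(k r) ((1-x)/(1-2x+x^r-x^(r+1)))^(k+1)`, stated as an identity of formal
power series over ℤ after clearing denominators. -/
theorem genFun_N (r k : ℕ) (hr : 1 ≤ r) :
    (1 - 2 * PowerSeries.X + PowerSeries.X ^ r - PowerSeries.X ^ (r + 1) :
        PowerSeries ℤ) ^ (k + 1) * PowerSeries.mk (fun n => (N n r k : ℤ)) =
      PowerSeries.X ^ (k * r) * (1 - PowerSeries.X) ^ (k + 1) := by
  obtain ⟨s, rfl⟩ := Nat.exists_eq_add_of_le' hr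
  simp_rw [N_eq_compCount]
  exact runDenom_pow_mul_compSeries s k
end

section
/- For every integer r ≥ 1, the generating function of the sequence n ↦ N(n,r,0) satisfies ∑_{n=0}^∞ N(n,r,0) x^n = (1 - x)/(1 - 2x + x^r - x^{r+1}); equivalently, as formal power series over ℤ, (1 - 2x + x^r - x^{r+1}) · ∑_{n=0}^∞ N(n,r,0) x^n = 1 - x. -/
/-!
A nonempty word starting with `0` is `0^a` followed by the complement of a word of length
`n - a` that again starts with `0` (or is empty), and its runs are the first run followed by the
runs of the remainder. Hence `N(n,r,0) = [n = 0] + ∑_{a ≠ 0, r} N(n-a,r,0)`, that is `G = 1 + P G`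
for `P = ∑_{a ≥ 1, a ≠ r} x^a`, and `(1 - x) P = x - x^r + x^(r+1)` turns this into the claim.
-/

open PowerSeries Finset

namespace List

theorem splitBy_map {α β : Type*} (f : α → β) (r : β → β → Bool) (l : List α) :
    (l.map f).splitBy r = (l.splitBy fun x y => r (f x) (f y)).map (map f) := by
  rw [splitBy_eq_iff]
  refine ⟨by rw [← map_flatten, flatten_splitBy], by simp [nil_notMem_splitBy], ?_, ?_⟩
  · simp only [mem_map, forall_exists_index, and_imp, forall_apply_eq_imp_iff₂, isChain_map]
    exact fun _ => isChain_of_mem_splitBy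
  · rw [isChain_map]
    refine (isChain_getLast_head_splitBy _ l).imp fun a b ⟨ha, hb, h⟩ => ?_
    exact ⟨by simpa using ha, by simpa using hb, by simpa [getLast_map, head_map] using h⟩

theorem splitBy_replicate_append {α : Type*} {r : α → α → Bool} {a : α} {k : ℕ} (hk : k ≠ 0)
    (ha : r a a) {l : List α} (hl : ∀ x ∈ l.head?, r a x = false) :
    (replicate k a ++ l).splitBy r = replicate k a :: l.splitBy r := by
  rw [splitBy_append, splitBy_of_isChain (by simpa using hk) (isChain_replicate_of_rel k ha)]
  · rfl
  · simpa [getLast?_replicate, hk] using hl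

section TakeDropWhile

variable {α : Type*} [BEq α] [LawfulBEq α] {a : α}

theorem replicate_length_takeWhile_append_dropWhile (a : α) (l : List α) :
    replicate (l.takeWhile (· == a)).length a ++ l.dropWhile (· == a) = l := by
  conv_rhs => rw [← takeWhile_append_dropWhile (p := (· == a)) (l := l)]
  rw [← eq_replicate_length.2 fun b hb => by simpa using mem_takeWhile_imp hb]

theorem dropWhile_replicate_append (k : ℕ) {l : List α} (hl : l.head? ≠ some a) :
    (replicate k a ++ l).dropWhile (· == a) = l := by
  rw [dropWhile_append_of_pos (by simp), dropWhile_beq_eq_self_of_head?_ne hl]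

theorem length_takeWhile_replicate_append (k : ℕ) {l : List α} (hl : l.head? ≠ some a) :
    ((replicate k a ++ l).takeWhile (· == a)).length = k := by
  have := congrArg length (takeWhile_append_dropWhile (p := (· == a)) (l := replicate k a ++ l))
  rw [length_append, dropWhile_replicate_append k hl, length_append, length_replicate] at this
  omega

theorem length_takeWhile_beq_ne_zero {l : List α} (hl : l.head? = some a) :
    (l.takeWhile (· == a)).length ≠ 0 := by
  cases l <;> simp_all

theorem head?_dropWhile_beq_ne (a : α) (l : List α) : (l.dropWhile (· == a)).head? ≠ some a := by
  intro h
  simpa [h] using head?_dropWhile_not (· == a) l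

end TakeDropWhile

theorem head?_map_not_ne {l : List Bool} (b : Bool) (hl : l.head? ≠ some (!b)) :
    (l.map not).head? ≠ some b := by
  cases l <;> simp_all

end List

theorem runs_map_not (l : List Bool) : runs (l.map not) = (runs l).map (List.map not) := by
  rw [runs, List.splitBy_map]
  congr
  funext x y
  cases x <;> cases y <;> rfl

theorem runCount_map_not (l : List Bool) (r : ℕ) : runCount (l.map not) r = runCount l r := by
  simp [runCount, runs_map_not, List.filter_map, Function.comp_def]

theorem runCount_replicate_append {b : Bool} {k : ℕ} (hk : k ≠ 0) {l : List Bool}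
    (hl : l.head? ≠ some b) (r : ℕ) :
    runCount (List.replicate k b ++ l) r = runCount l r + if k = r then 1 else 0 := by
  rw [runCount, runs, List.splitBy_replicate_append hk (by simp)
    fun x hx => beq_eq_false_iff_ne.2 fun hbx => hl (by rwa [hbx]), List.filter_cons]
  split_ifs <;> simp_all [runCount, runs]

theorem runCount_eq_of_head?_eq {b : Bool} {l : List Bool} (hl : l.head? = some b) (r : ℕ) :
    runCount l r = runCount (l.dropWhile (· == b)) r +
      if (l.takeWhile (· == b)).length = r then 1 else 0 := by
  conv_lhs => rw [← List.replicate_length_takeWhile_append_dropWhile b l]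
  exact runCount_replicate_append (List.length_takeWhile_beq_ne_zero hl)
    (List.head?_dropWhile_beq_ne b l) r

abbrev NWord (r n : ℕ) : Type :=
  {l : List Bool // l.length = n ∧ l.head? ≠ some true ∧ runCount l r = 0}

def finFunEquivNWord (r n : ℕ) :
    {w : Fin n → Bool // (List.ofFn w).head? ≠ some true ∧ runCount (List.ofFn w) r = 0} ≃
      NWord r n :=
  ((Equiv.vectorEquivFin Bool n).symm.subtypeEquiv fun w => by
    rw [← List.Vector.toList_ofFn w]; rfl).trans
    (Equiv.subtypeSubtypeEquivSubtypeInter (fun l : List Bool => l.length = n)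
      fun l => l.head? ≠ some true ∧ runCount l r = 0)

theorem card_NWord (r n : ℕ) : Nat.card (NWord r n) = N n r 0 := by
  rw [N, ← Nat.card_eq_fintype_card, Nat.card_congr (finFunEquivNWord r n)]

instance (r n : ℕ) : Finite (NWord r n) := Finite.of_equiv _ (finFunEquivNWord r n)

theorem NWord.head?_eq {r n : ℕ} (l : NWord r (n + 1)) : l.1.head? = some false := by
  obtain ⟨_ | ⟨b, l⟩, hlen, hhead, -⟩ := l
  · simp at hlen
  · cases b
    · rfl
    · exact absurd rfl hhead

/-- A word `0^a ++ map not d` corresponds to the pair `(a, d.length)` together with `d`. -/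
def firstRunEquiv (r n : ℕ) :
    NWord r (n + 1) ≃ Σ p : {p ∈ antidiagonal (n + 1) | p.1 ≠ 0 ∧ p.1 ≠ r}, NWord r p.1.2 where
  toFun l :=
    have hlen := congrArg List.length (l.1.replicate_length_takeWhile_append_dropWhile false)
    have hcount := runCount_eq_of_head?_eq l.head?_eq r
    ⟨⟨((l.1.takeWhile (· == false)).length, (l.1.dropWhile (· == false)).length), by
      rw [List.length_append, List.length_replicate, l.2.1] at hlen
      refine mem_filter.2 ⟨HasAntidiagonal.mem_antidiagonal.2 hlen,
        List.length_takeWhile_beq_ne_zero l.head?_eq, fun h => ?_⟩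
      simp only at h
      rw [l.2.2.2, if_pos h] at hcount
      omega⟩,
      ⟨(l.1.dropWhile (· == false)).map not, List.length_map _,
        List.head?_map_not_ne true (List.head?_dropWhile_beq_ne false l.1), by
        rw [runCount_map_not]
        omega⟩⟩
  invFun x :=
    have hp := mem_filter.1 x.1.2
    ⟨List.replicate x.1.1.1 false ++ x.2.1.map not, by
      rw [List.length_append, List.length_replicate, List.length_map, x.2.2.1,
        HasAntidiagonal.mem_antidiagonal.1 hp.1], by
      simp [List.head?_append, List.head?_replicate, hp.2.1], by
      rw [runCount_replicate_append hp.2.1 (List.head?_map_not_ne false x.2.2.2.1),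
        runCount_map_not, x.2.2.2.2, if_neg hp.2.2]⟩
  left_inv l := Subtype.ext <| by
    simp only [List.map_map, Function.comp_def, Bool.not_not, List.map_id']
    exact l.1.replicate_length_takeWhile_append_dropWhile false
  right_inv x := by
    have hd := List.head?_map_not_ne false x.2.2.2.1
    refine Sigma.subtype_ext (Subtype.ext (Prod.ext ?_ ?_)) ?_
    · exact List.length_takeWhile_replicate_append _ hd
    · dsimp only
      rw [List.dropWhile_replicate_append _ hd, List.length_map, x.2.2.1]
    · dsimp only
      rw [List.dropWhile_replicate_append _ hd, List.map_map, Function.comp_def]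
      simp

theorem N_zero_zero (r : ℕ) : N 0 r 0 = 1 := by
  rw [← card_NWord, Nat.card_eq_one_iff_exists]
  exact ⟨⟨[], rfl, by simp, rfl⟩, fun l => Subtype.ext (List.eq_nil_of_length_eq_zero l.2.1)⟩

theorem N_succ_zero (r n : ℕ) :
    N (n + 1) r 0 = ∑ p ∈ antidiagonal (n + 1) with p.1 ≠ 0 ∧ p.1 ≠ r, N p.2 r 0 := by
  rw [← card_NWord, Nat.card_congr (firstRunEquiv r n), Nat.card_sigma]
  simp_rw [card_NWord]
  exact sum_coe_sort _ fun p : ℕ × ℕ => N p.2 r 0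

def firstRunSeries (r : ℕ) : ℤ⟦X⟧ := mk fun a => if a ≠ 0 ∧ a ≠ r then 1 else 0

theorem mk_N_eq_one_add_firstRunSeries_mul (r : ℕ) :
    mk (fun n => (N n r 0 : ℤ)) = 1 + firstRunSeries r * mk fun n => (N n r 0 : ℤ) := by
  ext (_ | n)
  · simp [firstRunSeries, N_zero_zero]
  · rw [coeff_mk, N_succ_zero, Nat.cast_sum, sum_filter, map_add, coeff_mul]
    simp [firstRunSeries, ite_mul]

theorem one_sub_X_mul_firstRunSeries {r : ℕ} (hr : r ≠ 0) :
    (1 - X) * firstRunSeries r = X - X ^ r + X ^ (r + 1) := by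
  have h : firstRunSeries r = X * (mk 1 : ℤ⟦X⟧) - X ^ r := by
    ext (_ | m)
    · simpa [firstRunSeries] using hr
    · simp only [firstRunSeries, coeff_mk, map_sub, coeff_succ_X_mul, coeff_X_pow]
      split_ifs <;> simp_all
  rw [h]
  linear_combination X * mk_one_mul_one_sub_eq_one (S := ℤ)

/-- the generating function of `n ↦ N n r 0` is
`(1-x)/(1-2x+x^r-x^(r+1))`, stated over ℤ after clearing the denominator. -/
theorem genFun_N_zero (r : ℕ) (hr : 1 ≤ r) :
    (1 - 2 * PowerSeries.X + PowerSeries.X ^ r - PowerSeries.X ^ (r + 1) :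
        PowerSeries ℤ) * PowerSeries.mk (fun n => (N n r 0 : ℤ)) =
      1 - PowerSeries.X := by
  linear_combination (1 - X) * mk_N_eq_one_add_firstRunSeries_mul r +
    mk (fun n => (N n r 0 : ℤ)) * one_sub_X_mul_firstRunSeries (by omega : r ≠ 0)
end

section
/- For every integer r ≥ 2, N(r+1,r,0) = 2^r - 2; moreover N(2,1,0) = 1 (the only binary word of length 2 beginning with 0 and having no maximal run of length 1 is 00). -/
/-! A maximal run of length `r` in a word of length `r + 1` leaves exactly one letter outside it;
that letter sits at one end of the word and differs from the letter of the run. Hence the only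
words beginning with `0` that have such a run are `0^r 1` and `0 1^r`, which are distinct for
`r ≥ 2` and coincide for `r = 1`; all other words among the `2^r` beginning with `0` are counted. -/

namespace List

variable {α : Type*}

theorem exists_flatten_eq_append_singleton_or_cons {L : List (List α)} {g : List α} (hg : g ∈ L)
    (hlen : L.flatten.length = g.length + 1) : ∃ b, L.flatten = g ++ [b] ∨ L.flatten = b :: g := by
  obtain ⟨s, t, rfl⟩ := append_of_mem hg
  have hst : s.flatten.length + t.flatten.length = 1 := by
    simp only [flatten_append, flatten_cons, length_append] at hlen; omega
  rcases Nat.eq_zero_or_pos s.flatten.length with hs | hs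
  · obtain ⟨b, hb⟩ := length_eq_one_iff.mp (show t.flatten.length = 1 by omega)
    exact ⟨b, .inl (by simp [length_eq_zero_iff.mp hs, hb])⟩
  · obtain ⟨b, hb⟩ := length_eq_one_iff.mp (show s.flatten.length = 1 by omega)
    exact ⟨b, .inr (by simp [length_eq_zero_iff.mp (show t.flatten.length = 0 by omega), hb])⟩

end List

open List

theorem runCount_ne_zero_iff {w : List Bool} {r : ℕ} :
    runCount w r ≠ 0 ↔ ∃ g ∈ runs w, g.length = r := by
  simp [runCount, filter_eq_nil_iff]

theorem eq_replicate_of_mem_runs {w g : List Bool} (hg : g ∈ runs w) :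
    ∃ a, g = replicate g.length a := by
  obtain ⟨a, g', rfl⟩ := exists_cons_of_ne_nil (ne_nil_of_mem_splitBy hg)
  have hchain : (a :: g').IsChain (· = ·) := by simpa using isChain_of_mem_splitBy hg
  exact ⟨a, by rw [length_cons, replicate_succ, ← isChain_cons_eq_iff_eq_replicate.mp hchain]⟩

theorem runs_replicate {n : ℕ} (hn : n ≠ 0) (a : Bool) : runs (replicate n a) = [replicate n a] :=
  splitBy_of_isChain (by simpa using hn) (isChain_replicate_of_rel n (beq_self_eq_true a))

theorem runs_singleton (a : Bool) : runs [a] = [[a]] := rfl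

theorem runs_replicate_append_singleton {n : ℕ} (hn : n ≠ 0) {a b : Bool} (hab : a ≠ b) :
    runs (replicate n a ++ [b]) = [replicate n a, [b]] := by
  rw [runs, splitBy_append (by simp [getLast?_replicate, hn, hab]), ← runs, ← runs,
    runs_replicate hn, runs_singleton]
  rfl

theorem runs_cons_replicate {n : ℕ} (hn : n ≠ 0) {a b : Bool} (hab : a ≠ b) :
    runs (b :: replicate n a) = [[b], replicate n a] := by
  rw [← singleton_append, runs, splitBy_append (by simp [head?_replicate, hn, hab.symm]), ← runs,
    ← runs, runs_replicate hn, runs_singleton]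
  rfl

theorem replicate_notMem_runs_replicate_succ (n : ℕ) (a : Bool) :
    replicate n a ∉ runs (replicate (n + 1) a) := by
  simp [runs_replicate n.succ_ne_zero]

theorem runCount_ne_zero_iff_of_length_eq_succ {r : ℕ} (hr : r ≠ 0) {w : List Bool}
    (hw : w.length = r + 1) (h0 : w.head? = some false) :
    runCount w r ≠ 0 ↔ w = replicate r false ++ [true] ∨ w = false :: replicate r true := by
  rw [runCount_ne_zero_iff]
  constructor
  · rintro ⟨g, hg, hgr⟩
    obtain ⟨a, ha⟩ := eq_replicate_of_mem_runs hg
    obtain ⟨b, hb | hb⟩ := exists_flatten_eq_append_singleton_or_cons hg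
      (by rw [runs, flatten_splitBy, hw, hgr])
    all_goals rw [runs, flatten_splitBy] at hb; subst hb; rw [hgr] at ha; subst ha
    · obtain rfl : a = false := by simpa [head?_replicate, hr] using h0
      cases b
      · rw [← replicate_succ'] at hg
        exact absurd hg (replicate_notMem_runs_replicate_succ r false)
      · exact .inl rfl
    · obtain rfl : b = false := by simpa using h0
      cases a
      · rw [← replicate_succ] at hg
        exact absurd hg (replicate_notMem_runs_replicate_succ r false)
      · exact .inr rfl
  · rintro (rfl | rfl)
    · exact ⟨replicate r false, by simp [runs_replicate_append_singleton hr Bool.false_ne_true],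
        length_replicate⟩
    · exact ⟨replicate r true, by simp [runs_cons_replicate hr Bool.false_ne_true.symm],
        length_replicate⟩

theorem Fin.card_apply_zero_eq {α : Type*} [Fintype α] [DecidableEq α] (n : ℕ) (a : α) :
    Fintype.card {w : Fin (n + 1) → α // w 0 = a} = Fintype.card α ^ n := by
  rw [← Fintype.card_congr ((Fin.consEquiv fun _ => α).subtypeEquiv
      (p := fun p : α × (Fin n → α) => p.1 = a) fun _ => Iff.rfl),
    Fintype.card_congr (Equiv.prodSubtypeFstEquivSubtypeProd (p := fun b : α => b = a))]
  simp

open Finset in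
theorem N_succ_self_zero {r : ℕ} (hr : r ≠ 0) :
    N (r + 1) r 0 =
      2 ^ r - #({Fin.snoc (fun _ => false) true, Fin.cons false fun _ => true} :
        Finset (Fin (r + 1) → Bool)) := by
  set exceptional : Finset (Fin (r + 1) → Bool) :=
    {Fin.snoc (fun _ => false) true, Fin.cons false fun _ => true}
  have hsnoc : ofFn (Fin.snoc (fun _ => false) true : Fin (r + 1) → Bool) =
      replicate r false ++ [true] := by
    rw [ofFn_succ']; simp
  have hcons : ofFn (Fin.cons false fun _ => true : Fin (r + 1) → Bool) =
      false :: replicate r true := by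
    simp [ofFn_succ]
  have hgood (w : Fin (r + 1) → Bool) :
      ((ofFn w).head? ≠ some true ∧ runCount (ofFn w) r = 0) ↔
        w ∈ ({w | w 0 = false} : Finset _) \ exceptional := by
    have hhead : (ofFn w).head? = some (w 0) := by rw [ofFn_succ, head?_cons]
    cases h : w 0
    · have hbad :=
        runCount_ne_zero_iff_of_length_eq_succ hr length_ofFn (hhead.trans (congrArg _ h))
      rw [← hsnoc, ← hcons, ofFn_inj, ofFn_inj] at hbad
      simpa [exceptional, hhead, h, not_or] using not_congr hbad
    · simp [h]
  have hsub : exceptional ⊆ ({w | w 0 = false} : Finset (Fin (r + 1) → Bool)) := by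
    simp [exceptional, insert_subset_iff, Fin.snoc, Nat.pos_of_ne_zero hr]
  rw [N, Fintype.card_subtype, filter_congr fun w _ => hgood w, filter_mem_eq_inter, univ_inter,
    card_sdiff_of_subset hsub, ← Fintype.card_subtype, Fin.card_apply_zero_eq, Fintype.card_bool]

/-- for `r ≥ 2`, `N(r+1,r,0) = 2^r - 2`; moreover `N(2,1,0) = 1`. -/
theorem N_succ_diag :
    (∀ r : ℕ, 2 ≤ r → N (r + 1) r 0 = 2 ^ r - 2) ∧ N 2 1 0 = 1 := by
  refine ⟨fun r hr => ?_, ?_⟩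
  · rw [N_succ_self_zero (by omega), Finset.card_pair]
    intro h
    simpa [Fin.snoc, show 1 < r by omega] using congrFun h (Fin.succ ⟨0, by omega⟩)
  · rw [N_succ_self_zero one_ne_zero]
    decide
end

section
/- For all integers r ≥ 1 and n > r + 1, the number of binary words of length n - 1 that begin with 0 and contain exactly one maximal run of length r, this run being the final maximal run of the word, equals N(n-r-1,r,0). (The bijection appends to each word counted by N(n-r-1,r,0) a run of r copies of the symbol opposite to its last symbol.) -/
/-! Appending to a word `l` a run of `r` copies of the symbol opposite to its last one adds
exactly one maximal run, of length `r`, after the runs of `l`. Conversely, every word whose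
final run has length `r` and which is longer than `r` is obtained in this way from a unique
nonempty prefix, so this operation is a bijection between the two families of words. -/

open List

theorem card_subtype_ofFn_eq_ncard {α : Type*} {m : ℕ} (P : List α → Prop)
    [Fintype {w : Fin m → α // P (ofFn w)}] :
    Fintype.card {w : Fin m → α // P (ofFn w)} = {l : List α | l.length = m ∧ P l}.ncard := by
  have himage : ofFn '' {w : Fin m → α | P (ofFn w)} = {l | l.length = m ∧ P l} := by
    ext l
    constructor
    · rintro ⟨w, hw, rfl⟩
      exact ⟨length_ofFn, hw⟩
    · rintro ⟨rfl, hl⟩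
      exact ⟨fun i => l[i], by simpa using hl, ofFn_getElem⟩
  rw [← himage, Set.ncard_image_of_injective _ ofFn_injective, ← Nat.card_coe_set_eq]
  exact Nat.card_eq_fintype_card.symm

section Runs

variable {r : ℕ} {l w : List Bool}

theorem runs_replicate_s7 (hr : r ≠ 0) (c : Bool) : runs (replicate r c) = [replicate r c] :=
  splitBy_of_isChain (by simpa using hr) (isChain_replicate_of_rel r BEq.rfl)

theorem runs_append_replicate (hr : r ≠ 0) {c : Bool} (hc : ∀ x ∈ l.getLast?, x ≠ c) :
    runs (l ++ replicate r c) = runs l ++ [replicate r c] := by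
  rw [runs, splitBy_append, ← runs, ← runs, runs_replicate_s7 hr]
  intro x hx y hy
  obtain rfl : y = c := eq_of_mem_replicate (mem_of_mem_head? hy)
  simpa using hc x hx

theorem exists_eq_append_replicate_of_getLast?_runs {g : List Bool}
    (h : (runs w).getLast? = some g) :
    ∃ l c, (∀ x ∈ l.getLast?, x ≠ c) ∧ w = l ++ replicate g.length c := by
  obtain ⟨gs, hgs⟩ := getLast?_eq_some_iff.mp h
  have hg : g ∈ runs w := by simp [hgs]
  have hg_ne : g ≠ [] := ne_nil_of_mem_splitBy hg
  have hg_rep : g = replicate g.length (g.head hg_ne) :=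
    isChain_eq_iff_eq_replicate.mp ((isChain_of_mem_splitBy hg).imp fun _ _ => eq_of_beq) _
      (head?_eq_some_head hg_ne)
  refine ⟨gs.flatten, g.head hg_ne, ?_, ?_⟩
  · -- the last symbol of a run differs from the first symbol of the next one
    have hchain := isChain_getLast_head_splitBy (· == ·) w
    rw [← runs, hgs] at hchain
    rcases eq_nil_or_concat gs with rfl | ⟨gs', a, rfl⟩
    · simp
    obtain ⟨ha, _, hag⟩ := (isChain_append.mp hchain).2.2 a (by simp) g (by simp)
    intro x hx
    rw [concat_eq_append, flatten_concat, getLast?_append_of_ne_nil _ ha,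
      getLast?_eq_some_getLast ha] at hx
    obtain rfl := Option.some.inj hx
    simpa using hag
  · rw [← hg_rep, ← flatten_concat, ← hgs, runs, flatten_splitBy]

end Runs

def appendOppositeRun (r : ℕ) (l : List Bool) : List Bool :=
  l ++ replicate r (!l.getLastD false)

section AppendOppositeRun

variable {r : ℕ} {l w : List Bool}

theorem length_appendOppositeRun : (appendOppositeRun r l).length = l.length + r := by
  simp [appendOppositeRun]

theorem head?_appendOppositeRun (hl : l ≠ []) : (appendOppositeRun r l).head? = l.head? := by
  simp [appendOppositeRun, head?_append, head?_eq_some_head hl]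

theorem runs_appendOppositeRun (hr : r ≠ 0) :
    runs (appendOppositeRun r l) = runs l ++ [replicate r (!l.getLastD false)] :=
  runs_append_replicate hr fun x hx => by simp [getLastD_eq_getLast?, Option.mem_def.mp hx]

theorem runCount_appendOppositeRun (hr : r ≠ 0) :
    runCount (appendOppositeRun r l) r = runCount l r + 1 := by
  simp [runCount, runs_appendOppositeRun hr]

theorem getLast?_runs_appendOppositeRun (hr : r ≠ 0) :
    (runs (appendOppositeRun r l)).getLast?.map length = some r := by
  simp [runs_appendOppositeRun hr]

theorem exists_eq_appendOppositeRun (hw : r < w.length)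
    (h : (runs w).getLast?.map length = some r) : ∃ l ≠ [], w = appendOppositeRun r l := by
  obtain ⟨g, hg, rfl⟩ := Option.map_eq_some_iff.mp h
  obtain ⟨l, c, hc, rfl⟩ := exists_eq_append_replicate_of_getLast?_runs hg
  have hl : l ≠ [] := by rintro rfl; simp at hw
  have hlast := hc _ (getLast?_eq_some_getLast hl)
  refine ⟨l, hl, ?_⟩
  rw [appendOppositeRun, getLastD_eq_getLast?, getLast?_eq_some_getLast hl]
  cases c <;> simp_all

theorem bijOn_appendOppositeRun {m : ℕ} (hr : r ≠ 0) (hm : m ≠ 0) :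
    Set.BijOn (appendOppositeRun r)
      {l | l.length = m ∧ l.head? ≠ some true ∧ runCount l r = 0}
      {w | w.length = m + r ∧ w.head? ≠ some true ∧ runCount w r = 1 ∧
        (runs w).getLast?.map length = some r} := by
  refine ⟨?mapsTo, ?injOn, ?surjOn⟩
  · rintro l ⟨hlen, hhead, hcount⟩
    have hl : l ≠ [] := ne_nil_of_length_pos (by omega)
    exact ⟨by rw [length_appendOppositeRun, hlen], by rwa [head?_appendOppositeRun hl],
      by rw [runCount_appendOppositeRun hr, hcount], getLast?_runs_appendOppositeRun hr⟩
  · rintro l₁ ⟨h₁, -⟩ l₂ ⟨h₂, -⟩ h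
    exact append_inj_left h (h₁.trans h₂.symm)
  · rintro w ⟨hlen, hhead, hcount, hlast⟩
    obtain ⟨l, hl, rfl⟩ := exists_eq_appendOppositeRun (by omega) hlast
    rw [length_appendOppositeRun] at hlen
    rw [head?_appendOppositeRun hl] at hhead
    rw [runCount_appendOppositeRun hr] at hcount
    exact ⟨l, ⟨by omega, hhead, by omega⟩, rfl⟩

end AppendOppositeRun

/-- for `r ≥ 1` and `n > r + 1`, the number of binary words of
length `n - 1` that begin with `0` and contain exactly one maximal run of
length `r`, this run being the final maximal run, equals `N(n-r-1,r,0)`. -/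
theorem count_final_run_exact (r n : ℕ) (hr : 1 ≤ r) (hn : r + 1 < n) :
    Fintype.card {w : Fin (n - 1) → Bool //
        (List.ofFn w).head? ≠ some true ∧ runCount (List.ofFn w) r = 1 ∧
        (runs (List.ofFn w)).getLast?.map List.length = some r} =
      N (n - r - 1) r 0 := by
  rw [N, show n - 1 = n - r - 1 + r by omega]
  have hbij := bijOn_appendOppositeRun (r := r) (m := n - r - 1) (by omega) (by omega)
  exact (card_subtype_ofFn_eq_ncard _).trans <|
    hbij.ncard_eq.symm.trans (card_subtype_ofFn_eq_ncard _).symm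
end

section
/- For all integers n ≥ 0, r ≥ 1, k ≥ 0, M(n,r,k) = N(n,r+1,k); that is, the number of binary words of length n beginning with 0 that contain exactly k maximal runs of 1s of length r equals the number of binary words of length n beginning with 0 that contain exactly k maximal runs (of either symbol) of length r + 1. -/
open List

theorem exists_eq_replicate_append_s9 {α : Type*} [DecidableEq α] (b : α) (w : List α) :
    ∃ a v, w = replicate a b ++ v ∧ v.head? ≠ some b := by
  induction w with
  | nil => exact ⟨0, [], rfl, by simp⟩
  | cons c w ih =>
    by_cases hc : c = b
    · obtain ⟨a, v, rfl, hv⟩ := ih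
      exact ⟨a + 1, v, by simp [hc, replicate_succ], hv⟩
    · exact ⟨0, c :: w, rfl, by simpa using hc⟩

theorem runs_replicate_append_s9 {b : Bool} {a : ℕ} (ha : a ≠ 0) {v : List Bool}
    (hv : v.head? ≠ some b) : runs (replicate a b ++ v) = replicate a b :: runs v := by
  rw [runs, splitBy_append, splitBy_of_isChain (by simpa using ha)
    (isChain_replicate_of_rel a (by simp))]
  · rfl
  · simp only [getLast?_replicate, ha, if_false, Option.mem_def, Option.some.injEq,
      forall_eq', beq_eq_false_iff_ne]
    rintro _ hy rfl
    exact hv hy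

theorem runCount_replicate_append_s9 {b : Bool} {a : ℕ} (ha : a ≠ 0) {v : List Bool}
    (hv : v.head? ≠ some b) (s : ℕ) :
    runCount (replicate a b ++ v) s = runCount v s + if a = s then 1 else 0 := by
  simp only [runCount, runs_replicate_append_s9 ha hv, filter_cons, length_replicate]
  by_cases h : a = s <;> simp [h]

theorem oneRunCount_replicate_append {b : Bool} {a : ℕ} (ha : a ≠ 0) {v : List Bool}
    (hv : v.head? ≠ some b) (s : ℕ) :
    oneRunCount (replicate a b ++ v) s = oneRunCount v s + if a = s ∧ b = true then 1 else 0 := by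
  simp only [oneRunCount, runs_replicate_append_s9 ha hv, filter_cons, length_replicate,
    head?_replicate, ha, if_false, Option.some.injEq]
  by_cases h : a = s ∧ b = true <;> simp [h]

theorem oneRunCount_false_cons (v : List Bool) (s : ℕ) :
    oneRunCount (false :: v) s = oneRunCount v s := by
  obtain ⟨a, u, rfl, hu⟩ := exists_eq_replicate_append_s9 false v
  change oneRunCount (replicate (a + 1) false ++ u) s = _
  rw [oneRunCount_replicate_append a.succ_ne_zero hu]
  obtain rfl | ha := eq_or_ne a 0
  · simp
  · simp [oneRunCount_replicate_append ha hu]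

def flipAtZeros : Bool → List Bool → List Bool
  | _, [] => []
  | b, true :: w => b :: flipAtZeros b w
  | b, false :: w => (!b) :: flipAtZeros (!b) w

def flipAtZerosInv : Bool → List Bool → List Bool
  | _, [] => []
  | b, c :: w => (c == b) :: flipAtZerosInv c w

theorem length_flipAtZeros (b : Bool) (w : List Bool) : (flipAtZeros b w).length = w.length := by
  induction w generalizing b with
  | nil => rfl
  | cons c w ih => cases c <;> simp [flipAtZeros, ih]

def flipAtZerosEquiv (b : Bool) : List Bool ≃ List Bool where
  toFun := flipAtZeros b
  invFun := flipAtZerosInv b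
  left_inv w := by
    induction w generalizing b with
    | nil => rfl
    | cons c w ih => cases c <;> simp [flipAtZeros, flipAtZerosInv, ih]
  right_inv w := by
    induction w generalizing b with
    | nil => rfl
    | cons c w ih => cases c <;> cases b <;> simp [flipAtZeros, flipAtZerosInv, ih]

theorem flipAtZeros_replicate_true_append (b : Bool) (a : ℕ) (v : List Bool) :
    flipAtZeros b (replicate a true ++ v) = replicate a b ++ flipAtZeros b v := by
  induction a with
  | zero => rfl
  | succ a ih => simp [replicate_succ, flipAtZeros, ih]

theorem head?_flipAtZeros_true (w : List Bool) : (flipAtZeros true w).head? = w.head? := by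
  rcases w with _ | ⟨_ | _, _⟩ <;> rfl

theorem head?_flipAtZeros_ne {b : Bool} {w : List Bool} (hw : w.head? ≠ some true) :
    (flipAtZeros b w).head? ≠ some b := by
  rcases w with _ | ⟨_ | _, _⟩ <;> simp_all [flipAtZeros]

theorem runCount_flipAtZeros {r : ℕ} (hr : 0 < r) (b : Bool) {w : List Bool}
    (hw : w.head? ≠ some true) : runCount (flipAtZeros b w) (r + 1) = oneRunCount w r := by
  induction hlen : w.length using Nat.strong_induction_on generalizing w b with
  | _ n ih =>
  match w, hw with
  | [], _ => rfl
  | true :: _, hw => exact absurd rfl hw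
  | false :: t, _ =>
    obtain ⟨y, v, rfl, hv⟩ := exists_eq_replicate_append_s9 true t
    have hflip : flipAtZeros b (false :: (replicate y true ++ v)) =
        replicate (y + 1) (!b) ++ flipAtZeros (!b) v := by
      simp [flipAtZeros, flipAtZeros_replicate_true_append, replicate_succ]
    rw [hflip, runCount_replicate_append_s9 y.succ_ne_zero (head?_flipAtZeros_ne hv),
      ih v.length (by simp at hlen; omega) (!b) hv rfl, oneRunCount_false_cons]
    obtain rfl | hy := eq_or_ne y 0
    · simp [hr.ne']
    · simp [oneRunCount_replicate_append hy hv]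

theorem card_subtype_ofFn {α : Type*} (P : List α → Prop) (n : ℕ)
    [Fintype {w : Fin n → α // P (List.ofFn w)}] :
    Fintype.card {w : Fin n → α // P (List.ofFn w)} =
      Nat.card {l : List α // l.length = n ∧ P l} := by
  rw [← Nat.card_eq_fintype_card]
  refine Nat.card_congr (Equiv.ofBijective (fun w => ⟨List.ofFn w.1, length_ofFn, w.2⟩) ⟨?_, ?_⟩)
  · exact fun w w' h => Subtype.ext (List.ofFn_injective (congrArg Subtype.val h))
  · rintro ⟨l, rfl, hl⟩
    exact ⟨⟨l.get, by simpa using hl⟩, by simp⟩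

theorem card_subtype_ofFn_congr {α : Type*} (e : List α ≃ List α)
    (he : ∀ l, (e l).length = l.length) (P Q : List α → Prop) (hPQ : ∀ l, P l ↔ Q (e l))
    (n : ℕ) [Fintype {w : Fin n → α // P (List.ofFn w)}]
    [Fintype {w : Fin n → α // Q (List.ofFn w)}] :
    Fintype.card {w : Fin n → α // P (List.ofFn w)} =
      Fintype.card {w : Fin n → α // Q (List.ofFn w)} := by
  rw [card_subtype_ofFn, card_subtype_ofFn]
  exact Nat.card_congr (e.subtypeEquiv fun l => and_congr (by rw [he]) (hPQ l))

/-- `M(n,r,k) = N(n,r+1,k)`. -/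
theorem M_eq_N (n r k : ℕ) (hr : 1 ≤ r) : M n r k = N n (r + 1) k := by
  refine card_subtype_ofFn_congr (flipAtZerosEquiv true) (length_flipAtZeros true)
    (fun l => l.head? ≠ some true ∧ oneRunCount l r = k)
    (fun l => l.head? ≠ some true ∧ runCount l (r + 1) = k) (fun l => ?_) n
  show _ ↔ (flipAtZeros true l).head? ≠ some true ∧ runCount (flipAtZeros true l) (r + 1) = k
  rw [head?_flipAtZeros_true]
  exact and_congr_right fun hl => by rw [runCount_flipAtZeros hr true hl]
end

section
/- For every integer n ≥ 1, N(n,1,0) = F(n-1), where F denotes the Fibonacci sequence with F(0) = 0, F(1) = 1, and F(m+2) = F(m+1) + F(m); that is, the number of binary words of length n beginning with 0 having no maximal run of length 1 is the (n-1)-st Fibonacci number. -/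
/-!
A word of length `n + 2` with no run of length one that begins with `b` is `b :: b :: w`.
Either `w` begins with `b`, and then `b :: w` is such a word of length `n + 1`, or it does
not, and then `w` itself is such a word of length `n` not beginning with `b`. Writing `C n a`
(`noSingletonCount`) for the number of words of length `n` with no run of length one that do
not begin with `a`, this gives `C (n + 2) a = C (n + 1) a + C n (!a)` with `C 0 a = 1` and
`C 1 a = 0`, so `C (n + 1) a = fib n` for both letters `a`; `N n 1 0` is `C n true`.
-/

namespace List
variable {α : Type*} {r : α → α → Bool}

theorem splitBy_cons_cons_of_rel {a b : α} {l g : List α} {gs : List (List α)}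
    (hab : r a b) (h : (b :: l).splitBy r = g :: gs) :
    (a :: b :: l).splitBy r = (a :: g) :: gs := by
  obtain ⟨hflat, hnil, hchain, hlink⟩ := splitBy_eq_iff.1 h
  obtain ⟨g', rfl⟩ : ∃ g', g = b :: g' := by
    rcases g with _ | ⟨c, g'⟩
    · simp at hnil
    · obtain ⟨rfl, -⟩ : b = c ∧ _ := by simpa using hflat
      exact ⟨g', rfl⟩
  rw [splitBy_eq_iff]
  refine ⟨by simp [hflat], by simpa using hnil, ?_, ?_⟩
  · intro m hm
    rcases mem_cons.1 hm with rfl | hm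
    · exact (hchain _ mem_cons_self).cons_cons hab
    · exact hchain m (mem_cons_of_mem _ hm)
  · cases gs with
    | nil => exact isChain_singleton _
    | cons m ms =>
      rw [isChain_cons_cons] at hlink ⊢
      exact ⟨by simpa using hlink.1, hlink.2⟩

theorem splitBy_cons_cons_of_not_rel {a b : α} (l : List α) (hab : r a b = false) :
    (a :: b :: l).splitBy r = [a] :: (b :: l).splitBy r :=
  splitBy_append_cons (l := [a]) (a := b) l (by simpa using hab)

end List

section runs
variable {a : Bool} {l : List Bool}

theorem runs_cons_of_head?_ne (h : l.head? ≠ some a) : runs (a :: l) = [a] :: runs l := by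
  cases l with
  | nil => rfl
  | cons b l =>
    refine List.splitBy_cons_cons_of_not_rel l ?_
    simpa [Bool.beq_eq_decide_eq, eq_comm] using h

theorem runs_cons_cons_self {g : List Bool} {gs : List (List Bool)} (h : runs (a :: l) = g :: gs) :
    runs (a :: a :: l) = (a :: g) :: gs :=
  List.splitBy_cons_cons_of_rel (beq_self_eq_true a) h

theorem head?_eq_of_runCount_cons_one_eq_zero (h : runCount (a :: l) 1 = 0) :
    l.head? = some a := by
  by_contra hne
  simp [runCount, runs_cons_of_head?_ne hne] at h

theorem runCount_cons_cons_of_head?_ne {r : ℕ} (hr : r ≠ 2) (h : l.head? ≠ some a) :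
    runCount (a :: a :: l) r = runCount l r := by
  rw [runCount, runs_cons_cons_self (runs_cons_of_head?_ne h),
    List.filter_cons_of_neg (by simpa [eq_comm] using hr)]
  rfl

theorem runCount_one_cons_cons_cons_self (a : Bool) (l : List Bool) :
    runCount (a :: a :: a :: l) 1 = runCount (a :: a :: l) 1 := by
  obtain ⟨g, gs, hgs⟩ : ∃ g gs, runs (a :: l) = g :: gs :=
    List.exists_cons_of_ne_nil (List.splitBy_ne_nil.2 (List.cons_ne_nil a l))
  have hg : g ≠ [] :=
    List.ne_nil_of_mem_splitBy (show g ∈ runs (a :: l) from hgs ▸ List.mem_cons_self)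
  have h2 := runs_cons_cons_self hgs
  rw [runCount, runCount, runs_cons_cons_self h2, h2]
  simp [List.length_pos_iff.2 hg |>.ne']

theorem runCount_one_cons_eq_zero_iff :
    runCount (a :: l) 1 = 0 ↔ l.head? = some a ∧ runCount (a :: a :: l) 1 = 0 := by
  rcases l with _ | ⟨c, l⟩
  · simp [runCount, runs_cons_of_head?_ne (l := []) (a := a) (by simp)]
  · by_cases hc : c = a
    · subst hc
      simp [runCount_one_cons_cons_cons_self]
    · have : runCount (a :: c :: l) 1 ≠ 0 := fun h =>
        hc (by simpa using head?_eq_of_runCount_cons_one_eq_zero h)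
      simp [hc, this]

end runs

def wordCount (n : ℕ) (Q : List Bool → Prop) [DecidablePred Q] : ℕ :=
  Fintype.card {w : Fin n → Bool // Q (List.ofFn w)}

section wordCount
variable {n : ℕ} {Q Q' : List Bool → Prop} [DecidablePred Q] [DecidablePred Q']

theorem wordCount_congr (h : ∀ l, Q l ↔ Q' l) : wordCount n Q = wordCount n Q' :=
  Fintype.card_congr (Equiv.subtypeEquivRight fun _ => h _)

theorem wordCount_eq_zero (h : ∀ l, ¬ Q l) : wordCount n Q = 0 :=
  Fintype.card_eq_zero_iff.2 ⟨fun w => h _ w.2⟩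

theorem wordCount_zero (Q : List Bool → Prop) [DecidablePred Q] :
    wordCount 0 Q = if Q [] then 1 else 0 := by
  split_ifs with h
  · exact Fintype.card_eq_one_iff.2 ⟨⟨Fin.elim0, h⟩, fun w => Subsingleton.elim _ _⟩
  · exact Fintype.card_eq_zero_iff.2 ⟨fun w => h (by simpa using w.2)⟩

theorem wordCount_split (C : List Bool → Prop) [DecidablePred C] :
    wordCount n Q = wordCount n (fun l => C l ∧ Q l) + wordCount n (fun l => ¬ C l ∧ Q l) := by
  simp only [wordCount, Fintype.card_subtype]
  rw [← Finset.card_filter_add_card_filter_not (s := Finset.univ.filter fun w => Q (List.ofFn w))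
    (fun w => C (List.ofFn w)), Finset.filter_filter, Finset.filter_filter]
  simp only [and_comm]

theorem wordCount_succ (Q : List Bool → Prop) [DecidablePred Q] (a : Bool) :
    wordCount (n + 1) Q =
      wordCount n (fun l => Q (a :: l)) + wordCount n (fun l => Q ((!a) :: l)) := by
  simp only [wordCount, Fintype.card_subtype, Finset.card_filter]
  rw [← (Fin.consEquiv fun _ => Bool).sum_comp, Fintype.sum_prod_type, Fintype.sum_bool]
  cases a <;> simp [Fin.consEquiv, List.ofFn_succ, add_comm]

end wordCount

def noSingletonCount (n : ℕ) (a : Bool) : ℕ :=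
  wordCount n (fun l => l.head? ≠ some a ∧ runCount l 1 = 0)

theorem noSingletonCount_zero (a : Bool) : noSingletonCount 0 a = 1 := by
  rw [noSingletonCount, wordCount_zero, if_pos ⟨by simp, rfl⟩]

theorem noSingletonCount_succ_not (n : ℕ) (b : Bool) :
    noSingletonCount (n + 1) (!b) = wordCount n (fun l => runCount (b :: l) 1 = 0) := by
  rw [noSingletonCount, wordCount_succ _ (!b), wordCount_eq_zero (by simp), zero_add]
  exact wordCount_congr fun l => by simp

theorem noSingletonCount_one (a : Bool) : noSingletonCount 1 a = 0 := by
  rw [← Bool.not_not a, noSingletonCount_succ_not, wordCount_zero, if_neg]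
  cases a <;> decide

theorem noSingletonCount_add_two (n : ℕ) (a : Bool) :
    noSingletonCount (n + 2) a = noSingletonCount (n + 1) a + noSingletonCount n (!a) := by
  obtain ⟨b, rfl⟩ : ∃ b, a = !b := ⟨!a, (Bool.not_not a).symm⟩
  rw [Bool.not_not, noSingletonCount_succ_not, wordCount_succ _ b,
    wordCount_eq_zero (Q := fun l => runCount (b :: (!b) :: l) 1 = 0)
      fun l h => by simpa using head?_eq_of_runCount_cons_one_eq_zero h,
    add_zero, wordCount_split (fun l => l.head? = some b), noSingletonCount_succ_not]
  congr 1
  · exact wordCount_congr fun l => runCount_one_cons_eq_zero_iff.symm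
  · exact wordCount_congr fun l => and_congr_right fun hl =>
      by rw [runCount_cons_cons_of_head?_ne (by decide) hl]

theorem noSingletonCount_succ_eq_fib (n : ℕ) (a : Bool) :
    noSingletonCount (n + 1) a = Nat.fib n := by
  induction n using Nat.twoStepInduction generalizing a with
  | zero => exact noSingletonCount_one a
  | one => rw [noSingletonCount_add_two, noSingletonCount_one, noSingletonCount_zero]; rfl
  | more n ih₀ ih₁ => rw [noSingletonCount_add_two, ih₁, ih₀, Nat.fib_add_two, add_comm]

/-- for `n ≥ 1`, `N(n,1,0)` is the `(n-1)`-st Fibonacci number. -/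
theorem N_one_eq_fib (n : ℕ) (hn : 1 ≤ n) : N n 1 0 = Nat.fib (n - 1) := by
  obtain ⟨m, rfl⟩ := Nat.exists_eq_add_of_le' hn
  exact noSingletonCount_succ_eq_fib m true
end
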